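/- Let K be a perfectoid analytic field. The projection o_{K'} → o_K/(p) (to the zeroth component) is surjective, and induces an isomorphism o_{K'}/(z̄) ≅ o_K/(p) for any z̄ ∈ o_{K'} with |z̄|' = p^{-1}. In particular the residue fields of K' and K are naturally isomorphic. -/

import Mathlib

open scoped NNReal

set_option synthInstance.maxHeartbeats 1000000
set_option maxHeartbeats 1000000

/-- The valuation ring `o_K` of an analytic field `K` (a field complete with respect to a
multiplicative nonarchimedean norm, given by a rank-one valuation). -/
noncomputable abbrev OK (K : Type*) [Field K] [Valued K ℝ≥0] : Subring K :=
  Valued.v.integer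

/-- `o_K/(p)`. -/
abbrev OKmodp (p : ℕ) (K : Type*) [Field K] [Valued K ℝ≥0] : Type _ :=
  OK K ⧸ Ideal.span {(p : OK K)}

/-- `K` is discretely valued: the norm group is generated by a single `γ < 1`. -/
def IsDiscretelyValued (K : Type*) [Field K] [Valued K ℝ≥0] : Prop :=
  ∃ γ : ℝ≥0, γ < 1 ∧ ∀ x : K, x ≠ 0 → ∃ n : ℤ, Valued.v x = γ ^ n

theorem charP_OKmodp (p : ℕ) [Fact p.Prime] (K : Type*) [Field K] [Valued K ℝ≥0]
    (hp : Valued.v (p : K) = (p : ℝ≥0)⁻¹) : CharP (OKmodp p K) p := by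
  refine CharP.quotient _ p ?_
  intro hu
  rcases isUnit_iff_exists_inv.mp hu with ⟨u, huu⟩
  have hcast : (((p : OK K) * u : OK K) : K) = (1 : K) := by rw [huu]; rfl
  have hple : ((p : OK K) : K) = (p : K) := by push_cast; ring
  have hu1 : Valued.v ((u : K)) ≤ 1 := u.2
  have h1 : Valued.v ((p : K)) * Valued.v ((u : K)) = 1 := by
    rw [← hple, ← Valued.v.map_mul]
    rw [show ((p : OK K) : K) * ((u : K)) = (((p : OK K) * u : OK K) : K) from rfl, hcast]
    exact Valued.v.map_one
  rw [hp] at h1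
  have hp1 : ((p : ℝ≥0))⁻¹ < 1 := by
    have h2 : (1 : ℝ≥0) < (p : ℝ≥0) := by
      exact_mod_cast Nat.one_lt_cast.mpr (Fact.out : p.Prime).one_lt
    exact inv_lt_one_of_one_lt₀ h2
  have : (p : ℝ≥0)⁻¹ * Valued.v ((u : K)) ≤ (p : ℝ≥0)⁻¹ * 1 := by
    exact mul_le_mul_of_nonneg_left hu1 (by positivity)
  rw [h1] at this
  simp at this
  exact absurd (lt_of_le_of_lt this hp1) (lt_irrefl _)

/-- The tilt `o_{K'} = lim← o_K/(p)` (inverse limit under Frobenius), realized as a subring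
of the product ring `Π_n o_K/(p)`. -/
noncomputable def TiltRing (p : ℕ) [Fact p.Prime] (K : Type*) [Field K] [Valued K ℝ≥0]
    (hp : Valued.v (p : K) = (p : ℝ≥0)⁻¹) : Subring (∀ _ : ℕ, OKmodp p K) where
  carrier := {x | ∀ n, x (n + 1) ^ p = x n}
  zero_mem' := by
    intro n
    simp only [Pi.zero_apply]
    exact zero_pow (Fact.out : p.Prime).ne_zero
  one_mem' := by intro n; simp
  add_mem' := by
    haveI := charP_OKmodp p K hp
    intro a b ha hb n
    simp only [Pi.add_apply]
    rw [add_pow_char, ha n, hb n]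
  mul_mem' := by
    intro a b ha hb n
    simp only [Pi.mul_apply]
    rw [mul_pow, ha n, hb n]
  neg_mem' := by
    haveI := charP_OKmodp p K hp
    intro a ha n
    simp only [Pi.neg_apply]
    rw [show (-(a (n+1))) = (-1) * a (n+1) by ring, mul_pow, neg_one_pow_char, ha n]
    ring

/-- The defining property of the tilt norm `|x̄|' = |θ(x̄)|`: it vanishes at `0`, and
for `x̄ = (x̄_n)_n` in the tilt, `|x̄|' = |x_n|^(p^n)` for any lift `x_n ∈ o_K` of the
`n`-th component `x̄_n` whose norm exceeds `|p| = p⁻¹`. -/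
def IsTiltNorm (p : ℕ) [Fact p.Prime] (K : Type*) [Field K] [Valued K ℝ≥0]
    (hp : Valued.v (p : K) = (p : ℝ≥0)⁻¹)
    (N : TiltRing p K hp → ℝ≥0) : Prop :=
  N 0 = 0 ∧
  ∀ (x : TiltRing p K hp) (n : ℕ) (xn : OK K),
    Ideal.Quotient.mk (Ideal.span {(p : OK K)}) xn = x.val n →
    (p : ℝ≥0)⁻¹ < Valued.v (xn : K) →
    N x = Valued.v (xn : K) ^ (p ^ n)

/-!
Surjectivity: Frobenius is surjective on `o_K/(p)`, so any class has a compatible system of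
iterated `p`-th roots.

Kernel: let `x₀ = 0` and choose lifts `X_m, Z_m ∈ o_K` of `x_m, z_m`. Then `|X_m|^{p^m} ≤ |p|`,
while `|Z_m|^{p^m} = |z|' = |p|` as soon as `z_m ≠ 0`, so `X_m = Z_m q_m` with `q_m ∈ o_K`.
The classes of the `q_m` need not be Frobenius-compatible, but their `p`-th powers are, and
`y_n = [q_{n+k+1}]^{p^{k+1}}` (for `z_{k+1} ≠ 0`) is an element of the tilt with `x = z y`.
-/

theorem NNReal.pow_le_of_mul_le {c r d : ℝ≥0} {n : ℕ} (hc0 : 0 < c) (hc1 : c ≤ 1) (hn : 2 ≤ n)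
    (hrd : r * d ≤ c) (hr : c ≤ r ^ n) : d ^ n ≤ c := by
  have h : c * d ^ n ≤ c * c ^ (n - 1) := calc
    c * d ^ n ≤ (r * d) ^ n := by rw [mul_pow]; gcongr
    _ ≤ c ^ n := by gcongr
    _ = c * c ^ (n - 1) := by rw [← pow_succ', Nat.sub_add_cancel (by omega)]
  calc d ^ n ≤ c ^ (n - 1) := le_of_mul_le_mul_left h hc0
    _ ≤ c ^ 1 := pow_le_pow_of_le_one zero_le hc1 (by omega)
    _ = c := pow_one c

namespace OK

variable {K : Type*} [Field K] [Valued K ℝ≥0]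

theorem dvd_iff_valuation_le {a b : OK K} : a ∣ b ↔ Valued.v (b : K) ≤ Valued.v (a : K) :=
  (Valuation.integer.integers _).dvd_iff_le

theorem valuation_pow_sub_pow_le {p : ℕ} [Fact p.Prime] (a b : OK K) :
    Valued.v ((a ^ p - b ^ p : OK K) : K) ≤
      max (Valued.v ((a - b : OK K) : K) ^ p)
        (Valued.v (p : K) * Valued.v ((a - b : OK K) : K)) := by
  obtain ⟨r, hr⟩ := exists_add_pow_prime_eq (Fact.out : p.Prime) (a - b) b
  rw [sub_add_cancel] at hr
  have hsplit : a ^ p - b ^ p = (a - b) ^ p + p * (a - b) * (b * r) := by rw [hr]; ring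
  rw [hsplit]
  refine (Valuation.map_add _ _ _).trans (max_le_max ?_ ?_)
  · rw [SubmonoidClass.coe_pow, map_pow]
  · have hb : Valued.v ((b * r : OK K) : K) ≤ 1 := (b * r).2
    push_cast at hb ⊢
    rw [map_mul, map_mul, mul_assoc]
    exact mul_le_mul_right (mul_le_of_le_one_right' hb) _

variable {p : ℕ}

theorem mem_span_natCast_iff (hp : Valued.v (p : K) = (p : ℝ≥0)⁻¹) (a : OK K) :
    a ∈ Ideal.span {(p : OK K)} ↔ Valued.v (a : K) ≤ (p : ℝ≥0)⁻¹ := by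
  rw [Ideal.mem_span_singleton, dvd_iff_valuation_le, ← hp]
  simp

theorem mk_eq_mk_iff (hp : Valued.v (p : K) = (p : ℝ≥0)⁻¹) (a b : OK K) :
    Ideal.Quotient.mk (Ideal.span {(p : OK K)}) a = Ideal.Quotient.mk _ b ↔
      Valued.v ((a - b : OK K) : K) ≤ (p : ℝ≥0)⁻¹ := by
  rw [Ideal.Quotient.mk_eq_mk_iff_sub_mem, mem_span_natCast_iff hp]

theorem lt_valuation_of_mk_ne_zero (hp : Valued.v (p : K) = (p : ℝ≥0)⁻¹) {a : OK K}
    (ha : Ideal.Quotient.mk (Ideal.span {(p : OK K)}) a ≠ 0) : (p : ℝ≥0)⁻¹ < Valued.v (a : K) := by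
  rwa [ne_eq, Ideal.Quotient.eq_zero_iff_mem, mem_span_natCast_iff hp, not_le] at ha

theorem mk_pow_pow_eq_of_mul_eq [Fact p.Prime] (hp : Valued.v (p : K) = (p : ℝ≥0)⁻¹)
    {Z Z' X X' q q' : OK K} (hX : X = Z * q) (hX' : X' = Z' * q')
    (hZ : Ideal.Quotient.mk (Ideal.span {(p : OK K)}) (Z' ^ p) = Ideal.Quotient.mk _ Z)
    (hXX : Ideal.Quotient.mk (Ideal.span {(p : OK K)}) (X' ^ p) = Ideal.Quotient.mk _ X)
    (hZ' : (p : ℝ≥0)⁻¹ ≤ Valued.v (Z' : K) ^ (p * p)) :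
    Ideal.Quotient.mk (Ideal.span {(p : OK K)}) q' ^ (p * p) = Ideal.Quotient.mk _ q ^ p := by
  have hp0 : (0 : ℝ≥0) < (p : ℝ≥0)⁻¹ := by simp [(Fact.out : p.Prime).pos]
  have hp1 : (p : ℝ≥0)⁻¹ ≤ 1 :=
    inv_le_one_of_one_le₀ (by exact_mod_cast (Fact.out : p.Prime).one_le)
  set d := Valued.v ((q' ^ p - q : OK K) : K)
  -- `q'ᵖ ≡ q` holds only up to `|p| / |Z'|ᵖ`; raising to the `p`-th power brings it back to `|p|`.
  have hZd : Valued.v (Z' : K) ^ p * d ≤ (p : ℝ≥0)⁻¹ := by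
    have hsplit : Z' ^ p * (q' ^ p - q) = (X' ^ p - X) - (Z' ^ p - Z) * q := by
      rw [hX, hX']; ring
    have h := congrArg (fun a : OK K => Valued.v (a : K)) hsplit
    simp only [MulMemClass.coe_mul, SubmonoidClass.coe_pow, map_mul, map_pow] at h
    rw [h]
    refine (Valuation.map_sub _ _ _).trans (max_le ((mk_eq_mk_iff hp _ _).1 hXX) ?_)
    rw [MulMemClass.coe_mul, map_mul]
    exact mul_le_of_le_of_le_one ((mk_eq_mk_iff hp _ _).1 hZ) q.2
  have hd : d ^ p ≤ (p : ℝ≥0)⁻¹ :=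
    NNReal.pow_le_of_mul_le hp0 hp1 (Fact.out : p.Prime).two_le hZd (by rwa [← pow_mul])
  rw [← map_pow, ← map_pow, mk_eq_mk_iff hp, pow_mul]
  refine (valuation_pow_sub_pow_le _ _).trans (max_le hd ?_)
  rw [hp]
  exact mul_le_of_le_one_right' (q' ^ p - q).2

end OK

namespace TiltRing

variable {p : ℕ} [Fact p.Prime] {K : Type*} [Field K] [Valued K ℝ≥0]
  {hp : Valued.v (p : K) = (p : ℝ≥0)⁻¹}

theorem apply_add_pow (x : TiltRing p K hp) (n k : ℕ) : x.1 (n + k) ^ p ^ k = x.1 n := by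
  induction k with
  | zero => simp
  | succ k ih => rw [pow_succ', pow_mul, ← add_assoc, x.2 (n + k), ih]

theorem apply_ne_zero_of_le (x : TiltRing p K hp) {m n : ℕ} (hmn : m ≤ n) (hm : x.1 m ≠ 0) :
    x.1 n ≠ 0 := by
  obtain ⟨k, rfl⟩ := Nat.exists_eq_add_of_le hmn
  rintro h
  exact hm (by rw [← apply_add_pow x m k, h, zero_pow (pow_ne_zero _ (Fact.out : p.Prime).ne_zero)])

theorem exists_apply_zero_eq (hfrob : ∀ a : OKmodp p K, ∃ b, b ^ p = a) (a : OKmodp p K) :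
    ∃ x : TiltRing p K hp, x.1 0 = a :=
  ⟨⟨fun n => Nat.rec a (fun _ b => (hfrob b).choose) n, fun _ => (hfrob _).choose_spec⟩, rfl⟩

theorem valuation_pow_le_of_apply_zero_eq_zero {x : TiltRing p K hp} (hx : x.1 0 = 0) {m : ℕ}
    {X : OK K} (hX : Ideal.Quotient.mk (Ideal.span {(p : OK K)}) X = x.1 m) :
    Valued.v (X : K) ^ p ^ m ≤ (p : ℝ≥0)⁻¹ := by
  have h : Ideal.Quotient.mk (Ideal.span {(p : OK K)}) (X ^ p ^ m) = 0 := by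
    have h0 := apply_add_pow x 0 m
    rw [zero_add] at h0
    rw [map_pow, hX, h0, hx]
  rwa [Ideal.Quotient.eq_zero_iff_mem, OK.mem_span_natCast_iff hp, SubmonoidClass.coe_pow,
    map_pow] at h

theorem dvd_of_forall_apply_eq_mul {x z : TiltRing p K hp} {k : ℕ} (q : ℕ → OKmodp p K)
    (hq : ∀ n, x.1 (n + (k + 1)) = z.1 (n + (k + 1)) * q n)
    (hcompat : ∀ n, q (n + 1) ^ (p * p) = q n ^ p) : z ∣ x := by
  let t : TiltRing p K hp := ⟨fun n => q n ^ p, fun n => by simp only [← pow_mul, hcompat]⟩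
  refine ⟨t ^ p ^ k, Subtype.ext (funext fun n => ?_)⟩
  change x.1 n = z.1 n * (q n ^ p) ^ p ^ k
  rw [← apply_add_pow x n (k + 1), ← apply_add_pow z n (k + 1), hq, mul_pow, ← pow_mul,
    ← pow_succ']

end TiltRing

namespace IsTiltNorm

variable {p : ℕ} [Fact p.Prime] {K : Type*} [Field K] [Valued K ℝ≥0]
  {hp : Valued.v (p : K) = (p : ℝ≥0)⁻¹} {N : TiltRing p K hp → ℝ≥0}

theorem apply_eq_of_apply_ne_zero (hN : IsTiltNorm p K hp N) {z : TiltRing p K hp} {m : ℕ}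
    (hzm : z.1 m ≠ 0) {Z : OK K} (hZ : Ideal.Quotient.mk (Ideal.span {(p : OK K)}) Z = z.1 m) :
    N z = Valued.v (Z : K) ^ p ^ m :=
  hN.2 z m Z hZ (OK.lt_valuation_of_mk_ne_zero hp (hZ ▸ hzm))

theorem apply_zero_eq_zero (hN : IsTiltNorm p K hp N) {z : TiltRing p K hp}
    (hz : N z = (p : ℝ≥0)⁻¹) : z.1 0 = 0 := by
  by_contra hz0
  obtain ⟨Z, hZ⟩ := Ideal.Quotient.mk_surjective (z.1 0)
  have hNz := hN.apply_eq_of_apply_ne_zero hz0 hZ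
  rw [hz, pow_zero, pow_one] at hNz
  exact (OK.lt_valuation_of_mk_ne_zero hp (hZ ▸ hz0)).ne hNz

theorem dvd_of_apply_zero_eq_zero (hN : IsTiltNorm p K hp N) {z x : TiltRing p K hp}
    (hz : N z = (p : ℝ≥0)⁻¹) (hx : x.1 0 = 0) : z ∣ x := by
  have hp0 : (p : ℝ≥0)⁻¹ ≠ 0 := inv_ne_zero (Nat.cast_ne_zero.2 (Fact.out : p.Prime).ne_zero)
  obtain ⟨k, hk⟩ : ∃ k, z.1 (k + 1) ≠ 0 := by
    by_contra! h
    have hz0 : z = 0 := Subtype.ext <| funext fun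
      | 0 => hN.apply_zero_eq_zero hz
      | k + 1 => h k
    exact hp0 (hz.symm.trans (hz0 ▸ hN.1))
  choose Z hZ using fun m => Ideal.Quotient.mk_surjective (z.1 m)
  choose X hX using fun m => Ideal.Quotient.mk_surjective (x.1 m)
  have hvZ (n : ℕ) : Valued.v (Z (n + (k + 1)) : K) ^ p ^ (n + (k + 1)) = (p : ℝ≥0)⁻¹ :=
    hz ▸ (hN.apply_eq_of_apply_ne_zero (TiltRing.apply_ne_zero_of_le z (by omega) hk) (hZ _)).symm
  have hdvd (n : ℕ) : Z (n + (k + 1)) ∣ X (n + (k + 1)) :=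
    OK.dvd_iff_valuation_le.2 <| le_of_pow_le_pow_left₀ (pow_ne_zero _ (Fact.out : p.Prime).ne_zero)
      zero_le ((hvZ n).symm ▸ TiltRing.valuation_pow_le_of_apply_zero_eq_zero hx (hX _))
  choose q hq using hdvd
  refine TiltRing.dvd_of_forall_apply_eq_mul (k := k) (fun n => Ideal.Quotient.mk _ (q n))
    (fun n => by rw [← hX, ← hZ, hq n, map_mul]) fun n =>
      OK.mk_pow_pow_eq_of_mul_eq hp (hq n) (hq (n + 1)) ?_ ?_ ?_
  · rw [map_pow, hZ, hZ, show n + 1 + (k + 1) = n + (k + 1) + 1 by omega, z.2]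
  · rw [map_pow, hX, hX, show n + 1 + (k + 1) = n + (k + 1) + 1 by omega, x.2]
  · rw [← hvZ (n + 1)]
    exact pow_le_pow_of_le_one zero_le (Z _).2 (by
      rw [← sq]; exact Nat.pow_le_pow_right (Fact.out : p.Prime).pos (by omega))

end IsTiltNorm

theorem tilt_proj_surjective_ker_span_general (p : ℕ) [Fact p.Prime] (K : Type*) [Field K]
    [Valued K ℝ≥0]
    (hp : Valued.v (p : K) = (p : ℝ≥0)⁻¹)
    (hfrob : ∀ a : OKmodp p K, ∃ b, b ^ p = a)
    (N : TiltRing p K hp → ℝ≥0) (hN : IsTiltNorm p K hp N) :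
    Function.Surjective
      ((Pi.evalRingHom (fun _ : ℕ => OKmodp p K) 0).comp
        (Subring.subtype (TiltRing p K hp))) ∧
    ∀ z : TiltRing p K hp, N z = (p : ℝ≥0)⁻¹ →
      RingHom.ker ((Pi.evalRingHom (fun _ : ℕ => OKmodp p K) 0).comp
        (Subring.subtype (TiltRing p K hp))) = Ideal.span {z} := by
  refine ⟨TiltRing.exists_apply_zero_eq hfrob, fun z hz => ?_⟩
  ext x
  rw [RingHom.mem_ker, Ideal.mem_span_singleton]
  refine ⟨hN.dvd_of_apply_zero_eq_zero hz, ?_⟩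
  rintro ⟨y, rfl⟩
  change z.1 0 * y.1 0 = 0
  rw [hN.apply_zero_eq_zero hz, zero_mul]

/-- For a perfectoid analytic field `K`, the projection `o_{K'} → o_K/(p)` to the zeroth
component is surjective, and for any `z̄ ∈ o_{K'}` with `|z̄|' = p⁻¹` its kernel is the
ideal generated by `z̄`, so that it induces an isomorphism `o_{K'}/(z̄) ≅ o_K/(p)`. -/
theorem tilt_proj_surjective_ker_span (p : ℕ) [Fact p.Prime] (K : Type*) [Field K]
    [Valued K ℝ≥0] [CompleteSpace K]
    (hp : Valued.v (p : K) = (p : ℝ≥0)⁻¹)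
    (hnd : ¬ IsDiscretelyValued K)
    (hfrob : ∀ a : OKmodp p K, ∃ b, b ^ p = a)
    (N : TiltRing p K hp → ℝ≥0) (hN : IsTiltNorm p K hp N) :
    Function.Surjective
      ((Pi.evalRingHom (fun _ : ℕ => OKmodp p K) 0).comp
        (Subring.subtype (TiltRing p K hp))) ∧
    ∀ z : TiltRing p K hp, N z = (p : ℝ≥0)⁻¹ →
      RingHom.ker ((Pi.evalRingHom (fun _ : ℕ => OKmodp p K) 0).comp
        (Subring.subtype (TiltRing p K hp))) = Ideal.span {z} :=
  tilt_proj_surjective_ker_span_general p K hp hfrob N hN
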